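/- Suppose dim_ℂ R = 2n. Then for Q ∈ S ⊗ R one has β(Q, Q) = 0 if and only if there exist s₁, …, s_n ∈ S and r₁, …, r_n ∈ R with ω(r_i, r_j) = 0 for all i, j such that Q = Σ_{i=1}^n s_i ⊗ r_i. In particular every square-zero supercharge of the N=(n,0) supertranslation algebra has rank at most n, with its R-symmetry components spanning an ω-isotropic subspace. -/

import Mathlib

open TensorProduct ExteriorAlgebra

/-- The wedge `s ∧ t` as an element of the second exterior power `⋀[ℂ]^2 S`. -/
noncomputable def wedge {S : Type} [AddCommGroup S] [Module ℂ S] (s t : S) : ⋀[ℂ]^2 S :=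
  ⟨ι ℂ s * ι ℂ t, by
    show _ ∈ LinearMap.range (ι ℂ : S →ₗ[ℂ] ExteriorAlgebra ℂ S) ^ 2
    rw [pow_two]
    exact Submodule.mul_mem_mul (LinearMap.mem_range_self _ s) (LinearMap.mem_range_self _ t)⟩

/-!
Expand `Q = ∑ₖ bₖ ⊗ rₖ` over a basis `b` of `S`. Then `β Q Q = ∑ₖₗ ω(rₖ, rₗ) • bₖ ∧ bₗ`; as the
`bₖ ∧ bₗ` with `k < l` are independent and `ω` is skew, every `ω(rₖ, rₗ)` vanishes, so the `rₖ` span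
an isotropic subspace `W`. Nondegeneracy of `ω` gives `2 dim W ≤ dim R = 2n`, hence `W` is spanned
by `n` vectors `wᵢ`, and re-expanding each `rₖ` in them writes `Q` as `∑ᵢ sᵢ ⊗ wᵢ`.
-/

open Module Submodule Set

section Wedge

variable {S : Type} [AddCommGroup S] [Module ℂ S]

theorem wedge_eq_ιMulti (s t : S) : wedge s t = exteriorPower.ιMulti ℂ 2 ![s, t] := by
  ext
  simp [wedge, ExteriorAlgebra.ιMulti_apply]

theorem pairingDual_ιMulti_wedge (φ ψ : Dual ℂ S) (s t : S) :
    exteriorPower.pairingDual ℂ S 2 (exteriorPower.ιMulti ℂ 2 ![φ, ψ]) (wedge s t) =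
      φ s * ψ t - ψ s * φ t := by
  simp only [wedge_eq_ιMulti, exteriorPower.pairingDual_ιMulti_ιMulti, Matrix.det_fin_two,
    Matrix.of_apply, Matrix.cons_val_zero, Matrix.cons_val_one, Matrix.cons_val_fin_one]

theorem eq_zero_of_sum_smul_wedge_basis_eq_zero {ι : Type*} [Fintype ι] (b : Basis ι ℂ S)
    {c : ι → ι → ℂ} (hc : ∀ k l, -c k l = c l k)
    (h : ∑ k, ∑ l, c k l • wedge (b k) (b l) = 0) (i j : ι) : c i j = 0 := by
  classical
  -- pairing with `b.coord i ∧ b.coord j` extracts `c i j - c j i`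
  have hpair := congr(exteriorPower.pairingDual ℂ S 2
    (exteriorPower.ιMulti ℂ 2 ![b.coord i, b.coord j]) $h)
  simp only [map_sum, map_smul, pairingDual_ιMulti_wedge, Basis.coord_apply, Basis.repr_self,
    Finsupp.single_apply, mul_ite, mul_one, mul_zero, smul_eq_mul, mul_sub, Finset.sum_sub_distrib,
    Finset.sum_ite_eq', Finset.mem_univ, if_true, map_zero] at hpair
  linear_combination (hpair - hc i j) / 2

end Wedge

theorem TensorProduct.exists_eq_sum_basis_tmul {K M N ι : Type*} [CommSemiring K] [AddCommMonoid M]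
    [Module K M] [AddCommMonoid N] [Module K N] [Fintype ι] (b : Basis ι K M) (x : M ⊗[K] N) :
    ∃ r : ι → N, x = ∑ i, b i ⊗ₜ r i := by
  obtain ⟨c, rfl⟩ := TensorProduct.eq_repr_basis_left b x
  exact ⟨c, Finsupp.sum_fintype _ _ fun _ => tmul_zero _ _⟩

theorem TensorProduct.exists_sum_tmul_eq_of_mem_span {K M N ι κ : Type*} [CommSemiring K]
    [AddCommMonoid M] [Module K M] [AddCommMonoid N] [Module K N] [Fintype ι] [Fintype κ]
    (s : κ → M) (r : κ → N) {w : ι → N} (hr : ∀ k, r k ∈ span K (range w)) :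
    ∃ s' : ι → M, ∑ k, s k ⊗ₜ[K] r k = ∑ i, s' i ⊗ₜ w i := by
  choose c hc using fun k => (mem_span_range_iff_exists_fun K).mp (hr k)
  refine ⟨fun i => ∑ k, c k i • s k, ?_⟩
  simp_rw [← hc, tmul_sum, sum_tmul, tmul_smul, smul_tmul']
  exact Finset.sum_comm

theorem Submodule.exists_fin_span_range_eq {K V : Type*} [DivisionRing K] [AddCommGroup V]
    [Module K V] (W : Submodule K V) [FiniteDimensional K W] {n : ℕ} (h : finrank K W ≤ n) :
    ∃ w : Fin n → V, span K (range w) = W := by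
  let b := Module.finBasis K W
  let w : Fin n → V := Function.extend (Fin.castLE h) (fun i => (b i : V)) 0
  have hw : w ∘ Fin.castLE h = W.subtype ∘ b :=
    Function.extend_comp (Fin.castLE_injective h) _ _
  refine ⟨w, le_antisymm (span_le.mpr ?_) ?_⟩
  · rintro _ ⟨j, rfl⟩
    by_cases hj : ∃ i, Fin.castLE h i = j
    · obtain ⟨i, rfl⟩ := hj
      simp [w, (Fin.castLE_injective h).extend_apply]
    · simp [w, Function.extend_apply' _ _ _ hj]
  · calc W = map W.subtype (span K (range b)) := by rw [b.span_eq, map_subtype_top]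
      _ = span K (range (W.subtype ∘ b)) := by rw [map_span, range_comp]
      _ ≤ span K (range w) := span_mono (hw ▸ range_comp_subset_range _ _)

namespace LinearMap.BilinForm

variable {K V : Type*} [Field K] [AddCommGroup V] [Module K V]

theorem span_range_le_orthogonal {ι : Type*} (B : LinearMap.BilinForm K V) {r : ι → V}
    (h : ∀ i j, B (r i) (r j) = 0) :
    span K (Set.range r) ≤ B.orthogonal (span K (Set.range r)) := by
  rw [span_le]
  rintro _ ⟨j, rfl⟩ x hx
  exact (span_le (p := LinearMap.ker (B.flip (r j))).mpr (by rintro _ ⟨i, rfl⟩; exact h i j)) hx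

theorem two_mul_finrank_le_of_le_orthogonal [FiniteDimensional K V] {B : LinearMap.BilinForm K V}
    (hB : B.SeparatingLeft) {W : Submodule K V} (hW : W ≤ B.orthogonal W) :
    2 * finrank K W ≤ finrank K V := by
  have hsum := finrank_add_finrank_orthogonal' (B := B) W
  rw [separatingLeft_iff_ker_eq_bot.mp hB, inf_bot_eq, finrank_bot, add_zero] at hsum
  have := Submodule.finrank_mono hW
  omega

end LinearMap.BilinForm

section Bracket

variable {S R : Type} [AddCommGroup S] [Module ℂ S] [AddCommGroup R] [Module ℂ R]
  {ω : R →ₗ[ℂ] R →ₗ[ℂ] ℂ} {β : (S ⊗[ℂ] R) →ₗ[ℂ] (S ⊗[ℂ] R) →ₗ[ℂ] ⋀[ℂ]^2 S}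

theorem apply_sum_tmul_sum_tmul
    (hβ : ∀ (s s' : S) (r r' : R), β (s ⊗ₜ[ℂ] r) (s' ⊗ₜ[ℂ] r') = ω r r' • wedge s s')
    {ι κ : Type*} [Fintype ι] [Fintype κ] (s : ι → S) (r : ι → R) (s' : κ → S) (r' : κ → R) :
    β (∑ i, s i ⊗ₜ r i) (∑ j, s' j ⊗ₜ r' j) = ∑ i, ∑ j, ω (r i) (r' j) • wedge (s i) (s' j) := by
  simp only [map_sum, LinearMap.sum_apply, hβ]
  exact Finset.sum_comm

end Bracket

/-- If `dim_ℂ R = 2n`, then `Q ∈ S ⊗ R` satisfies `β Q Q = 0` if and only if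
`Q = Σ_{i=1}^n s_i ⊗ r_i` with all `ω (r_i) (r_j) = 0`; i.e. every square-zero supercharge of
the `N=(n,0)` supertranslation algebra has rank at most `n`, with R-symmetry components
spanning an isotropic subspace. -/
theorem square_zero_iff_isotropic_rank_le_n
    {S R : Type} [AddCommGroup S] [Module ℂ S] [FiniteDimensional ℂ S]
    [AddCommGroup R] [Module ℂ R] [FiniteDimensional ℂ R]
    (n : ℕ) (hR : Module.finrank ℂ R = 2 * n)
    (ω : R →ₗ[ℂ] R →ₗ[ℂ] ℂ)
    (halt : ∀ r : R, ω r r = 0)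
    (hnd : ∀ r : R, (∀ r' : R, ω r r' = 0) → r = 0)
    (β : (S ⊗[ℂ] R) →ₗ[ℂ] (S ⊗[ℂ] R) →ₗ[ℂ] ⋀[ℂ]^2 S)
    (hβ : ∀ (s s' : S) (r r' : R),
      β (s ⊗ₜ[ℂ] r) (s' ⊗ₜ[ℂ] r') = ω r r' • wedge s s')
    (Q : S ⊗[ℂ] R) :
    β Q Q = 0 ↔
      ∃ (s : Fin n → S) (r : Fin n → R),
        (∀ i j, ω (r i) (r j) = 0) ∧ Q = ∑ i, s i ⊗ₜ[ℂ] r i := by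
  refine ⟨fun hQ => ?_, ?_⟩
  · obtain ⟨r, rfl⟩ := TensorProduct.exists_eq_sum_basis_tmul (Module.finBasis ℂ S) Q
    rw [apply_sum_tmul_sum_tmul hβ] at hQ
    have hr : ∀ k l, ω (r k) (r l) = 0 :=
      eq_zero_of_sum_smul_wedge_basis_eq_zero _ (fun k l => LinearMap.IsAlt.neg halt _ _) hQ
    have hW := LinearMap.BilinForm.span_range_le_orthogonal ω hr
    have hdim : finrank ℂ (span ℂ (Set.range r)) ≤ n := by
      have := LinearMap.BilinForm.two_mul_finrank_le_of_le_orthogonal hnd hW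
      omega
    obtain ⟨w, hw⟩ := (span ℂ (Set.range r)).exists_fin_span_range_eq hdim
    have hw_mem : ∀ i, w i ∈ span ℂ (Set.range r) :=
      fun i => hw ▸ subset_span (mem_range_self i)
    obtain ⟨s, hs⟩ := TensorProduct.exists_sum_tmul_eq_of_mem_span (Module.finBasis ℂ S) r
      fun k => hw.symm ▸ subset_span (mem_range_self k)
    exact ⟨s, w, fun i j => hW (hw_mem j) _ (hw_mem i), hs⟩
  · rintro ⟨s, r, hr, rfl⟩
    rw [apply_sum_tmul_sum_tmul hβ]
    simp [hr]
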